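/- arXiv:1602.08587 — 2 statements merged into one kernel-verified Lean document; each statement's English description precedes it below -/
import Mathlib

section
/- (Lemma 6.7 of the paper: properties of the invariants l^{(s)}_i and k^{(s)}_i.) Suppose m'+d > r and let p ∈ X_d(m,m'), with l^{(s)}_i and k^{(s)}_i as in the context. Then: (i) l^{(s)}_i = k^{(s)}_i + s − i − 1 if k^{(s)}_i ∈ {1,…,r}, and l^{(s)}_i = s − i + r if k^{(s)}_i ∈ {0,r̄,…,1̄}. (ii) For 1 ≤ s ≤ m−m' and 1 ≤ i ≤ d−1: if k^{(s)}_i ∈ {1,…,r} then k^{(s)}_i < k^{(s)}_{i+1} and l^{(s)}_i ≤ l^{(s)}_{i+1}; if k^{(s)}_i ∈ {0,r̄,…,1̄} then k^{(s)}_i ≤ k^{(s)}_{i+1}, l^{(s)}_i = l^{(s)}_{i+1} + 1, and k^{(s)}_i = k^{(s)}_{i+1} holds if and only if k^{(s)}_i = k^{(s)}_{i+1} = 0. (iii) For 1 ≤ s ≤ m−m'−1 and 1 ≤ i ≤ d−1: k^{(s)}_i < k^{(s+1)}_{i+1} in the order on J. -/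
/-!
Lemma 6.7 of "Explicit forms of cluster variables on double Bruhat cells of type B".

We encode the totally ordered set `J = {1 < 2 < ⋯ < r < 0 < r̄ < ⋯ < 1̄}` by the
natural numbers `1, …, 2r+1`: a value `v` with `1 ≤ v ≤ r` is the letter `v`,
the value `r+1` is the letter `0`, and a value `v` with `r+2 ≤ v ≤ 2r+1` is the
barred letter `\overline{2r+2-v}`.  The order on `J` is then the usual order on `ℕ`.
-/

namespace Stmt0

/-- A path in `X_d(m,m')` (Definition 5.2 of the paper), in the encoding above.
`a s i` is the entry `a^{(s)}_i` for `0 ≤ s ≤ m`, `1 ≤ i ≤ d`. -/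
structure PathB (r m m' d : ℕ) : Type where
  a : ℕ → ℕ → ℕ
  /-- every entry lies in `J` -/
  mem : ∀ s, s ≤ m → ∀ i, 1 ≤ i → i ≤ d → 1 ≤ a s i ∧ a s i ≤ 2*r+1
  /-- `a^{(s)}_1 < a^{(s)}_2 < ⋯ < a^{(s)}_d` -/
  strictRow : ∀ s, s ≤ m → ∀ i, 1 ≤ i → i < d → a s i < a s (i+1)
  /-- if `a^{(s)}_i ∈ {1,…,r-1}` then `a^{(s+1)}_i ∈ {a^{(s)}_i, a^{(s)}_i + 1}` -/
  stepLow : ∀ s, s < m → ∀ i, 1 ≤ i → i ≤ d → a s i ≤ r - 1 →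
      a (s+1) i = a s i ∨ a (s+1) i = a s i + 1
  /-- if `a^{(s)}_i ∈ {r,0,r̄,…,1̄}` then `a^{(s)}_i ≤ a^{(s+1)}_i ≤ 1̄` -/
  stepHigh : ∀ s, s < m → ∀ i, 1 ≤ i → i ≤ d → r ≤ a s i →
      a s i ≤ a (s+1) i ∧ a (s+1) i ≤ 2*r+1
  /-- `(a^{(0)}_1,…,a^{(0)}_d) = (1,…,d)` -/
  init : ∀ i, 1 ≤ i → i ≤ d → a 0 i = i
  /-- the end point of the path: `(m'+1,…,m'+d)` if `m'+d ≤ r`, and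
  `(m'+1,…,r,\overline{d-r+m'},…,1̄)` if `m'+d > r` -/
  final : ∀ i, 1 ≤ i → i ≤ d → a m i = if m' + i ≤ r then m' + i else 2*r+1 - d + i
  /-- if `a^{(s+1)}_i ∈ {0,r̄,…,1̄}` then `a^{(s+1)}_i ≤ a^{(s)}_{i+1}`, with equality
  only if both equal `0` -/
  barredCond : ∀ s, s < m → ∀ i, 1 ≤ i → i < d → r + 1 ≤ a (s+1) i →
      a (s+1) i ≤ a s (i+1) ∧ (a (s+1) i = a s (i+1) → a (s+1) i = r + 1)

/-- The set whose increasing enumeration is `l^{(1)}_i < ⋯ < l^{(m-m')}_i`. -/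
def S (r m m' d : ℕ) (p : PathB r m m' d) (i : ℕ) : Set ℕ :=
  if i + m' ≤ r then
    {s | s < m ∧ p.a s i = p.a (s+1) i}
  else
    {s | s ≤ m + r - i - m' ∧
      ((p.a s i ≤ r ∧ p.a s i = p.a (s+1) i) ∨ r + 1 ≤ p.a s i)}

/-- `l` is the increasing enumeration `s ↦ l^{(s)}_i` (for `1 ≤ s ≤ m-m'`) of the set
`S r m m' d p i`, for each `1 ≤ i ≤ d`. -/
def IsEnum (r m m' d : ℕ) (p : PathB r m m' d) (l : ℕ → ℕ → ℕ) : Prop :=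
  ∀ i, 1 ≤ i → i ≤ d →
    (∀ s t, 1 ≤ s → s < t → t ≤ m - m' → l s i < l t i) ∧
    (∀ s, 1 ≤ s → s ≤ m - m' → l s i ∈ S r m m' d p i) ∧
    (∀ x ∈ S r m m' d p i, ∃ s, 1 ≤ s ∧ s ≤ m - m' ∧ l s i = x)

/-!
Write `c_i(t)` for the number of elements of `S_i` below `t`. While column `i` is unbarred, each
step either stays (and is counted in `S_i`) or raises the entry by one, and once the entry is
barred every step is counted; with `0` encoded as `r + 1` this gives
`min(a^{(t)}_i, 0) + c_i(t) = i + t`. As `c_i(l^{(s)}_i) = s - 1`, this is (i). Comparing the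
identity in neighbouring columns through the strict row condition gives
`l^{(s)}_i ≤ l^{(s+1)}_{i+1}`, hence (iii) by monotonicity of the columns. In the barred case of
(ii), the condition `a^{(s+1)}_i ≤ a^{(s)}_{i+1}` shows that `l^{(s)}_i - 1` lies in `S_{i+1}`, and
(i) identifies it as `l^{(s)}_{i+1}`.
-/

theorem count_add_one_of_strictMonoOn {P : ℕ → Prop} [DecidablePred P] {f : ℕ → ℕ} {N : ℕ}
    (hf : StrictMonoOn f (Set.Icc 1 N)) (hP : ∀ x, P x ↔ ∃ t ∈ Set.Icc 1 N, f t = x)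
    {s : ℕ} (hs : s ∈ Set.Icc 1 N) : Nat.count P (f s) + 1 = s := by
  have hfilter : {x ∈ Finset.range (f s) | P x} = (Finset.Ico 1 s).image f := by
    ext x
    simp only [Finset.mem_filter, Finset.mem_range, Finset.mem_image, Finset.mem_Ico, hP]
    constructor
    · rintro ⟨hx, t, ht, rfl⟩
      exact ⟨t, ⟨ht.1, (hf.lt_iff_lt ht hs).1 hx⟩, rfl⟩
    · rintro ⟨t, ⟨ht1, hts⟩, rfl⟩
      have ht : t ∈ Set.Icc 1 N := ⟨ht1, hts.le.trans hs.2⟩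
      exact ⟨hf ht hs hts, t, ht, rfl⟩
  have hinj : Set.InjOn f (Finset.Ico 1 s) :=
    hf.injOn.mono fun t ht => by
      simp only [Finset.coe_Ico, Set.mem_Ico] at ht
      exact ⟨ht.1, ht.2.le.trans hs.2⟩
  rw [Nat.count_eq_card_filter_range, hfilter, Finset.card_image_of_injOn hinj, Nat.card_Ico]
  have := hs.1
  omega

namespace PathB

variable {r m m' d : ℕ} (p : PathB r m m' d) {i : ℕ}

lemma a_le_a_succ (hi : 1 ≤ i) (hid : i ≤ d) {t : ℕ} (ht : t < m) : p.a t i ≤ p.a (t + 1) i := by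
  by_cases h : p.a t i ≤ r - 1
  · rcases p.stepLow t ht i hi hid h with h' | h' <;> omega
  · exact (p.stepHigh t ht i hi hid (by omega)).1

lemma a_succ_le_add_one (hi : 1 ≤ i) (hid : i ≤ d) {t : ℕ} (ht : t < m) (h : p.a t i ≤ r - 1) :
    p.a (t + 1) i ≤ p.a t i + 1 := by
  rcases p.stepLow t ht i hi hid h with h' | h' <;> omega

lemma a_le_a_of_le (hi : 1 ≤ i) (hid : i ≤ d) {t u : ℕ} (htu : t ≤ u) (hu : u ≤ m) :
    p.a t i ≤ p.a u i := by
  induction u, htu using Nat.le_induction with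
  | base => exact le_rfl
  | succ u _ ih => exact (ih (by omega)).trans (p.a_le_a_succ hi hid (by omega))

lemma a_le_of_add_le (hi : 1 ≤ i) (hid : i ≤ d) (hreg : i + m' ≤ r) {t : ℕ} (ht : t ≤ m) :
    p.a t i ≤ r := by
  have := p.a_le_a_of_le hi hid ht le_rfl
  rw [p.final i hi hid, if_pos (by omega)] at this
  omega

lemma bounds_of_mem_S {t : ℕ} (ht : t ∈ S r m m' d p i) :
    t ≤ m ∧ (i + m' ≤ r ∨ t ≤ m + r - i - m') := by
  unfold S at ht
  split_ifs at ht with hreg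
  · exact ⟨ht.1.le, Or.inl hreg⟩
  · exact ⟨by have := ht.1; omega, Or.inr ht.1⟩

lemma a_succ_eq_of_mem_S {t : ℕ} (ht : t ∈ S r m m' d p i) (hle : p.a t i ≤ r) :
    p.a (t + 1) i = p.a t i := by
  unfold S at ht
  split_ifs at ht
  · exact ht.2.symm
  · rcases ht.2 with h | h
    · exact h.2.symm
    · omega

lemma mem_S_iff_of_lt (hi : 1 ≤ i) (hid : i ≤ d) {t : ℕ} (ht : t < m)
    (hreg : i + m' ≤ r ∨ t ≤ m + r - i - m') :
    t ∈ S r m m' d p i ↔ p.a t i = p.a (t + 1) i ∨ r + 1 ≤ p.a t i := by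
  unfold S
  split_ifs with h
  · have := p.a_le_of_add_le hi hid h ht.le
    simp only [Set.mem_ofPred_eq]
    omega
  · simp only [Set.mem_ofPred_eq]
    omega

open Classical

lemma min_add_count (hi : 1 ≤ i) (hid : i ≤ d) (hd : d ≤ r) {t : ℕ} (ht : t ≤ m)
    (hreg : i + m' ≤ r ∨ t ≤ m + r - i - m' + 1) :
    min (p.a t i) (r + 1) + Nat.count (· ∈ S r m m' d p i) t = i + t := by
  induction t with
  | zero =>
    rw [p.init i hi hid, Nat.count_zero]
    omega
  | succ t ih =>
    have ih := ih (by omega) (by omega)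
    have hmem := p.mem_S_iff_of_lt hi hid (t := t) (by omega) (by omega)
    have hmono := p.a_le_a_succ hi hid (t := t) (by omega)
    have hstep := p.a_succ_le_add_one hi hid (t := t) (by omega)
    rw [Nat.count_succ]
    split_ifs with h <;> rw [hmem] at h <;> omega

lemma min_add_count_of_le_mem (hi : 1 ≤ i) (hid : i ≤ d) (hd : d ≤ r) {t u : ℕ}
    (hu : u ∈ S r m m' d p i) (htu : t ≤ u) :
    min (p.a t i) (r + 1) + Nat.count (· ∈ S r m m' d p i) t = i + t := by
  obtain ⟨hum, hreg⟩ := p.bounds_of_mem_S hu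
  exact p.min_add_count hi hid hd (by omega) (by omega)

end PathB

namespace IsEnum

open Classical

variable {r m m' d : ℕ} {p : PathB r m m' d} {l : ℕ → ℕ → ℕ} {i s : ℕ}

lemma mem_S (hl : IsEnum r m m' d p l) (hi : 1 ≤ i) (hid : i ≤ d) (hs : 1 ≤ s)
    (hsN : s ≤ m - m') : l s i ∈ S r m m' d p i :=
  (hl i hi hid).2.1 s hs hsN

lemma lt_of_lt (hl : IsEnum r m m' d p l) (hi : 1 ≤ i) (hid : i ≤ d) {t : ℕ} (hs : 1 ≤ s)
    (hst : s < t) (htN : t ≤ m - m') : l s i < l t i :=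
  (hl i hi hid).1 s t hs hst htN

lemma exists_eq (hl : IsEnum r m m' d p l) (hi : 1 ≤ i) (hid : i ≤ d) {u : ℕ}
    (hu : u ∈ S r m m' d p i) : ∃ s, 1 ≤ s ∧ s ≤ m - m' ∧ l s i = u :=
  (hl i hi hid).2.2 u hu

lemma count_add_one (hl : IsEnum r m m' d p l) (hi : 1 ≤ i) (hid : i ≤ d) (hs : 1 ≤ s)
    (hsN : s ≤ m - m') : Nat.count (· ∈ S r m m' d p i) (l s i) + 1 = s := by
  refine count_add_one_of_strictMonoOn (fun a ha b hb hab => hl.lt_of_lt hi hid ha.1 hab hb.2)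
    (fun u => ⟨fun hu => ?_, ?_⟩) ⟨hs, hsN⟩
  · obtain ⟨t, ht, htN, rfl⟩ := hl.exists_eq hi hid hu
    exact ⟨t, ⟨ht, htN⟩, rfl⟩
  · rintro ⟨t, ⟨ht, htN⟩, rfl⟩
    exact hl.mem_S hi hid ht htN

lemma min_add_eq (hl : IsEnum r m m' d p l) (hi : 1 ≤ i) (hid : i ≤ d) (hd : d ≤ r) (hs : 1 ≤ s)
    (hsN : s ≤ m - m') : min (p.a (l s i) i) (r + 1) + s = i + l s i + 1 := by
  have hcount := hl.count_add_one hi hid hs hsN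
  have := p.min_add_count_of_le_mem hi hid hd (hl.mem_S hi hid hs hsN) le_rfl
  omega

lemma lt_min_add_of_le (hl : IsEnum r m m' d p l) (hi : 1 ≤ i) (hid : i ≤ d) (hd : d ≤ r)
    (hs : 1 ≤ s) (hsN : s ≤ m - m') {t : ℕ} (ht : t ≤ l s i) :
    i + t < min (p.a t i) (r + 1) + s := by
  have hcount := hl.count_add_one hi hid hs hsN
  have hmono := Nat.count_monotone (· ∈ S r m m' d p i) ht
  have := p.min_add_count_of_le_mem hi hid hd (hl.mem_S hi hid hs hsN) ht
  omega

lemma eq_next_col_add_one_of_barred (hl : IsEnum r m m' d p l) (hi : 1 ≤ i) (hid : i < d)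
    (hd : d ≤ r) (hs : 1 ≤ s) (hsN : s ≤ m - m') (hk : r + 1 ≤ p.a (l s i) i) :
    l s i = l s (i + 1) + 1 := by
  have hformula := hl.min_add_eq hi hid.le hd hs hsN
  obtain ⟨hlm, hreg⟩ := p.bounds_of_mem_S (hl.mem_S hi hid.le hs hsN)
  have hhigh : r < i + m' := by
    by_contra h
    have := p.a_le_of_add_le hi hid.le (by omega) hlm
    omega
  obtain ⟨u, hu⟩ : ∃ u, l s i = u + 1 := ⟨l s i - 1, by omega⟩
  rw [hu] at hk hlm hreg hformula ⊢
  have hbarred := (p.barredCond u (by omega) i hi hid hk).1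
  have hmem : u ∈ S r m m' d p (i + 1) := by
    rw [p.mem_S_iff_of_lt (i := i + 1) (by omega) hid (by omega) (by omega)]
    omega
  obtain ⟨t, ht, htN, htu⟩ := hl.exists_eq (i := i + 1) (by omega) hid hmem
  have := hl.min_add_eq (i := i + 1) (by omega) hid hd ht htN
  rw [htu] at this
  obtain rfl : t = s := by omega
  rw [htu]

lemma le_next_col_of_unbarred (hl : IsEnum r m m' d p l) (hi : 1 ≤ i) (hid : i < d) (hd : d ≤ r)
    (hs : 1 ≤ s) (hsN : s ≤ m - m') (hk : p.a (l s i) i ≤ r) : l s i ≤ l s (i + 1) := by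
  by_contra! hlt
  have hformula := hl.min_add_eq hi hid.le hd hs hsN
  have hformula' := hl.min_add_eq (i := i + 1) (by omega) hid hd hs hsN
  by_cases hk' : p.a (l s (i + 1)) (i + 1) ≤ r
  · have hstay := p.a_succ_eq_of_mem_S (hl.mem_S (i := i + 1) (by omega) hid hs hsN) hk'
    have hbound := hl.lt_min_add_of_le (t := l s (i + 1) + 1) hi hid.le hd hs hsN hlt
    have hlm := (p.bounds_of_mem_S (hl.mem_S hi hid.le hs hsN)).1
    have hrow := p.strictRow (l s (i + 1) + 1) (by omega) i hi hid
    omega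
  · omega

lemma le_next_col_succ (hl : IsEnum r m m' d p l) (hi : 1 ≤ i) (hid : i < d) (hd : d ≤ r)
    (hs : 1 ≤ s) (hsN : s + 1 ≤ m - m') : l s i ≤ l (s + 1) (i + 1) := by
  by_cases hk : p.a (l s i) i ≤ r
  · by_contra! hlt
    have hbound := hl.lt_min_add_of_le hi hid.le hd hs (by omega) hlt.le
    have hformula := hl.min_add_eq (i := i + 1) (by omega) hid hd (by omega) hsN
    have hlm := (p.bounds_of_mem_S (hl.mem_S hi hid.le hs (by omega))).1
    have hrow := p.strictRow (l (s + 1) (i + 1)) (by omega) i hi hid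
    have hmono := p.a_le_a_of_le hi hid.le hlt.le hlm
    omega
  · have hshift := hl.eq_next_col_add_one_of_barred hi hid hd hs (by omega) (by omega)
    have := hl.lt_of_lt (i := i + 1) (by omega) hid hs (lt_add_one s) hsN
    omega

end IsEnum

theorem lemma_6_7_general (r m m' d : ℕ) (hdr : d ≤ r - 1)
    (p : PathB r m m' d) (l : ℕ → ℕ → ℕ) (hl : IsEnum r m m' d p l)
    (k : ℕ → ℕ → ℕ) (hk : ∀ s i, k s i = p.a (l s i) i) :
    -- (i): `l^{(s)}_i = k^{(s)}_i + s - i - 1` if `k^{(s)}_i ∈ {1,…,r}` and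
    --      `l^{(s)}_i = s - i + r` if `k^{(s)}_i ∈ {0,r̄,…,1̄}`
    (∀ s i, 1 ≤ s → s ≤ m - m' → 1 ≤ i → i ≤ d →
      (k s i ≤ r → l s i + i + 1 = k s i + s) ∧
      (r + 1 ≤ k s i → l s i + i = s + r)) ∧
    -- (ii)
    (∀ s i, 1 ≤ s → s ≤ m - m' → 1 ≤ i → i < d →
      (k s i ≤ r → k s i < k s (i+1) ∧ l s i ≤ l s (i+1)) ∧
      (r + 1 ≤ k s i →
        k s i ≤ k s (i+1) ∧ l s i = l s (i+1) + 1 ∧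
        (k s i = k s (i+1) ↔ k s i = r + 1 ∧ k s (i+1) = r + 1))) ∧
    -- (iii): `k^{(s)}_i < k^{(s+1)}_{i+1}`
    (∀ s i, 1 ≤ s → s + 1 ≤ m - m' → 1 ≤ i → i < d →
      k s i < k (s+1) (i+1)) := by
  have hd : d ≤ r := by omega
  simp only [hk]
  refine ⟨fun s i hs hsN hi hid => ?_, fun s i hs hsN hi hid => ?_, fun s i hs hsN hi hid => ?_⟩
  · have := hl.min_add_eq hi hid hd hs hsN
    omega
  · have hformula := hl.min_add_eq hi hid.le hd hs hsN
    have hformula' := hl.min_add_eq (i := i + 1) (by omega) hid hd hs hsN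
    refine ⟨fun hunbarred => ?_, fun hbarred => ?_⟩
    · have := hl.le_next_col_of_unbarred hi hid hd hs hsN hunbarred
      omega
    · have hshift := hl.eq_next_col_add_one_of_barred hi hid hd hs hsN hbarred
      have hlm := (p.bounds_of_mem_S (hl.mem_S hi hid.le hs hsN)).1
      have hcond := p.barredCond (l s (i + 1)) (by omega) i hi hid (by rwa [← hshift])
      rw [← hshift] at hcond
      omega
  · have hlm := (p.bounds_of_mem_S (hl.mem_S (i := i + 1) (by omega) hid (by omega) hsN)).1
    have hnext := hl.le_next_col_succ hi hid hd hs hsN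
    calc p.a (l s i) i < p.a (l s i) (i + 1) := p.strictRow _ (hnext.trans hlm) i hi hid
      _ ≤ p.a (l (s + 1) (i + 1)) (i + 1) := p.a_le_a_of_le (by omega) hid hnext hlm

/-- Lemma 6.7: properties of the invariants `l^{(s)}_i` and `k^{(s)}_i` of a path
`p ∈ X_d(m,m')`, in the case `m' + d > r`. -/
theorem lemma_6_7 (r m m' d : ℕ) (hr : 2 ≤ r) (hm'1 : 1 ≤ m') (hm'm : m' ≤ m)
    (hmr : m ≤ r) (hd1 : 1 ≤ d) (hdr : d ≤ r - 1) (hcase : r < m' + d)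
    (p : PathB r m m' d) (l : ℕ → ℕ → ℕ) (hl : IsEnum r m m' d p l)
    (k : ℕ → ℕ → ℕ) (hk : ∀ s i, k s i = p.a (l s i) i) :
    -- (i): `l^{(s)}_i = k^{(s)}_i + s - i - 1` if `k^{(s)}_i ∈ {1,…,r}` and
    --      `l^{(s)}_i = s - i + r` if `k^{(s)}_i ∈ {0,r̄,…,1̄}`
    (∀ s i, 1 ≤ s → s ≤ m - m' → 1 ≤ i → i ≤ d →
      (k s i ≤ r → l s i + i + 1 = k s i + s) ∧
      (r + 1 ≤ k s i → l s i + i = s + r)) ∧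
    -- (ii)
    (∀ s i, 1 ≤ s → s ≤ m - m' → 1 ≤ i → i < d →
      (k s i ≤ r → k s i < k s (i+1) ∧ l s i ≤ l s (i+1)) ∧
      (r + 1 ≤ k s i →
        k s i ≤ k s (i+1) ∧ l s i = l s (i+1) + 1 ∧
        (k s i = k s (i+1) ↔ k s i = r + 1 ∧ k s (i+1) = r + 1))) ∧
    -- (iii): `k^{(s)}_i < k^{(s+1)}_{i+1}`
    (∀ s i, 1 ≤ s → s + 1 ≤ m - m' → 1 ≤ i → i < d →
      k s i < k (s+1) (i+1)) :=
  lemma_6_7_general r m m' d hdr p l hl k hk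

end Stmt0
end

section
/- (Constructive step in the proof of Theorem 5.6: realizability of admissible families.) Suppose m'+d > r. Let (K^{(s)}_i)_{1≤i≤d, 1≤s≤m−m'} be any family of elements of J satisfying: 1 ≤ K^{(s)}_1 ≤ K^{(s)}_2 ≤ ⋯ ≤ K^{(s)}_d ≤ 1̄ in the order on J, with K^{(s)}_i = K^{(s)}_{i+1} only if both equal 0; i ≤ K^{(1)}_i ≤ ⋯ ≤ K^{(m−m')}_i ≤ m'+i for 1 ≤ i ≤ r−m'; i ≤ K^{(1)}_i ≤ ⋯ ≤ K^{(m−m')}_i ≤ 1̄ for r−m'+1 ≤ i ≤ d; and K^{(s)}_i < K^{(s+1)}_{i+1} for all admissible s, i. Then there exists a path p ∈ X_d(m,m') whose invariants satisfy k^{(s)}_i(p) = K^{(s)}_i for all 1 ≤ i ≤ d and 1 ≤ s ≤ m−m'. -/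
/-!
The constructive step in the proof of Theorem 5.6 (type `B_r`, case `d < r`):
every admissible family `(K^{(s)}_i)` is realized by a path in `X_d(m,m')`.

Encoding of `J = {1 < ⋯ < r < 0 < r̄ < ⋯ < 1̄}` by `1, …, 2r+1`: a value
`v ∈ [1,r]` is the letter `v`, the value `r+1` is the letter `0`, and a value
`v ∈ [r+2, 2r+1]` is the barred letter `\overline{2r+2-v}`.
-/

namespace Stmt2

/-- A path in `X_d(m,m')` (Definition 5.2 of the paper), in the encoding above. -/
structure PathB (r m m' d : ℕ) : Type where
  a : ℕ → ℕ → ℕ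
  mem : ∀ s, s ≤ m → ∀ i, 1 ≤ i → i ≤ d → 1 ≤ a s i ∧ a s i ≤ 2*r+1
  strictRow : ∀ s, s ≤ m → ∀ i, 1 ≤ i → i < d → a s i < a s (i+1)
  stepLow : ∀ s, s < m → ∀ i, 1 ≤ i → i ≤ d → a s i ≤ r - 1 →
      a (s+1) i = a s i ∨ a (s+1) i = a s i + 1
  stepHigh : ∀ s, s < m → ∀ i, 1 ≤ i → i ≤ d → r ≤ a s i →
      a s i ≤ a (s+1) i ∧ a (s+1) i ≤ 2*r+1
  init : ∀ i, 1 ≤ i → i ≤ d → a 0 i = i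
  final : ∀ i, 1 ≤ i → i ≤ d → a m i = if m' + i ≤ r then m' + i else 2*r+1 - d + i
  barredCond : ∀ s, s < m → ∀ i, 1 ≤ i → i < d → r + 1 ≤ a (s+1) i →
      a (s+1) i ≤ a s (i+1) ∧ (a (s+1) i = a s (i+1) → a (s+1) i = r + 1)

/-- The set whose increasing enumeration is `l^{(1)}_i < ⋯ < l^{(m-m')}_i`. -/
def S (r m m' d : ℕ) (p : PathB r m m' d) (i : ℕ) : Set ℕ :=
  if i + m' ≤ r then
    {s | s < m ∧ p.a s i = p.a (s+1) i}
  else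
    {s | s ≤ m + r - i - m' ∧
      ((p.a s i ≤ r ∧ p.a s i = p.a (s+1) i) ∨ r + 1 ≤ p.a s i)}

/-- `l` is the increasing enumeration `s ↦ l^{(s)}_i` (for `1 ≤ s ≤ m-m'`) of the set
`S r m m' d p i`, for each `1 ≤ i ≤ d`. -/
def IsEnum (r m m' d : ℕ) (p : PathB r m m' d) (l : ℕ → ℕ → ℕ) : Prop :=
  ∀ i, 1 ≤ i → i ≤ d →
    (∀ s t, 1 ≤ s → s < t → t ≤ m - m' → l s i < l t i) ∧
    (∀ s, 1 ≤ s → s ≤ m - m' → l s i ∈ S r m m' d p i) ∧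
    (∀ x ∈ S r m m' d p i, ∃ s, 1 ≤ s ∧ s ≤ m - m' ∧ l s i = x)

/-!
Column `i` of the path starts at `i` and climbs by one at each step, except that it pauses for one
step at each unbarred value `K^{(s)}_i ≤ r`, at time `l^{(s)}_i = K^{(s)}_i + s - 1 - i`; after the
last pause it reaches `r`. It then takes the barred values `K^{(s)}_i > r` in turn, `K^{(s)}_i` at
time `l^{(s)}_i = r + s - i`, and finally jumps to its end point. The times `l^{(s)}_i` increase
strictly with `s`, so the position at time `t` is `i + t` minus the number of pauses before `t`,
and the invariants of the path are the `K^{(s)}_i` by construction. The row condition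
`K^{(s)}_i ≤ K^{(s)}_{i+1}` makes column `i` pause no later than column `i+1` and reach `r` later,
and the diagonal condition `K^{(s)}_i < K^{(s+1)}_{i+1}` compares their barred phases; together
they give the strict increase along rows and the condition on barred letters.
-/

open Finset

lemma le_card_filter_Icc_iff {P : ℕ → Prop} [DecidablePred P] {M s : ℕ}
    (hP : ∀ x y, 1 ≤ x → x ≤ y → y ≤ M → P y → P x) (hs : s ∈ Set.Icc 1 M) :
    P s ↔ s ≤ #{x ∈ Icc 1 M | P x} := by
  obtain ⟨hs1, hsM⟩ := hs
  constructor
  · intro h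
    calc s = #(Icc 1 s) := by simp
      _ ≤ _ := card_le_card fun x hx => by
        simp only [mem_Icc, mem_filter] at hx ⊢
        exact ⟨⟨hx.1, hx.2.trans hsM⟩, hP x s hx.1 hx.2 hsM h⟩
  · intro h
    by_contra hn
    have : #{x ∈ Icc 1 M | P x} ≤ #(Icc 1 (s - 1)) := card_le_card fun x hx => by
      simp only [mem_Icc, mem_filter] at hx ⊢
      exact ⟨hx.1.1, by by_contra; exact hn (hP s x hs1 (by omega) hx.1.2 hx.2)⟩
    simp only [Nat.card_Icc] at this
    omega

lemma le_two_mul_add_one_sub_add {x : ℕ → ℕ} {r d i : ℕ} (hdr : d ≤ r) (hd : x d ≤ 2 * r + 1)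
    (hx : ∀ j, 1 ≤ j → j < d → x j ≤ x (j + 1) ∧ (x j = x (j + 1) → x j = r + 1))
    (hi : 1 ≤ i) (hid : i ≤ d) : x i ≤ 2 * r + 1 - d + i := by
  induction hid using Nat.decreasingInduction with
  | self => omega
  | of_succ j hj ih =>
    have := ih (by omega)
    obtain ⟨hle, heq⟩ := hx j hi hj
    rcases hle.lt_or_eq with hlt | h
    · omega
    · have := heq h
      omega

/-- A column `k s = K^{(s)}_i`, `1 ≤ s ≤ M`, of an admissible family, whose path ends at `F`. -/
structure IsAdmissibleColumn (r i M F : ℕ) (k : ℕ → ℕ) : Prop where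
  index_le : i ≤ r
  lt_final : r < F
  monotoneOn : MonotoneOn k (Set.Icc 1 M)
  le_apply : ∀ s ∈ Set.Icc 1 M, i ≤ k s
  apply_le : ∀ s ∈ Set.Icc 1 M, k s ≤ F

/-- The time `l^{(s)}_i` at which the path is to realize the invariant `k s`. -/
def stayTime (r i : ℕ) (k : ℕ → ℕ) (s : ℕ) : ℕ :=
  if k s ≤ r then k s + s - 1 - i else r + s - i

def unbarredCount (r M : ℕ) (k : ℕ → ℕ) : ℕ := #{s ∈ Icc 1 M | k s ≤ r}

def stayCount (r i M : ℕ) (k : ℕ → ℕ) (t : ℕ) : ℕ := #{s ∈ Icc 1 M | stayTime r i k s < t}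

def columnPath (r i M F : ℕ) (k : ℕ → ℕ) (t : ℕ) : ℕ :=
  if t ≤ r - i + unbarredCount r M k then i + t - stayCount r i M k t
  else if t ≤ r - i + M then k (t + i - r) else F

section Column

variable {r i M F : ℕ} {k : ℕ → ℕ}

lemma stayTime_of_le {s : ℕ} (h : k s ≤ r) : stayTime r i k s = k s + s - 1 - i := if_pos h

lemma stayTime_of_lt {s : ℕ} (h : r < k s) : stayTime r i k s = r + s - i := if_neg h.not_ge

lemma unbarredCount_le : unbarredCount r M k ≤ M := by
  simpa [unbarredCount] using card_filter_le (Icc 1 M) (fun s => k s ≤ r)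

lemma unbarredCount_eq (h : ∀ s ∈ Set.Icc 1 M, k s ≤ r) : unbarredCount r M k = M := by
  rw [unbarredCount, filter_true_of_mem fun s hs => h s (Set.mem_Icc.2 (mem_Icc.1 hs))]
  simp

lemma unbarredCount_le_of_le {k' : ℕ → ℕ} (h : ∀ s ∈ Set.Icc 1 M, k s ≤ k' s) :
    unbarredCount r M k' ≤ unbarredCount r M k :=
  card_le_card fun s hs => by
    simp only [mem_filter, mem_Icc] at hs ⊢
    exact ⟨hs.1, (h s hs.1).trans hs.2⟩

lemma stayCount_le (t : ℕ) : stayCount r i M k t ≤ M := by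
  simpa [stayCount] using card_filter_le (Icc 1 M) (fun s => stayTime r i k s < t)

lemma stayCount_mono : Monotone (stayCount r i M k) := fun _ _ h =>
  card_le_card fun s hs => by
    simp only [mem_filter] at hs ⊢
    exact ⟨hs.1, hs.2.trans_le h⟩

lemma columnPath_of_le {t : ℕ} (ht : t ≤ r - i + unbarredCount r M k) :
    columnPath r i M F k t = i + t - stayCount r i M k t := if_pos ht

lemma columnPath_of_lt_of_le {t : ℕ} (ht : r - i + unbarredCount r M k < t)
    (ht' : t ≤ r - i + M) : columnPath r i M F k t = k (t + i - r) := by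
  rw [columnPath, if_neg ht.not_ge, if_pos ht']

lemma columnPath_of_lt {t : ℕ} (ht : r - i + M < t) : columnPath r i M F k t = F := by
  have := unbarredCount_le (r := r) (M := M) (k := k)
  rw [columnPath, if_neg (by omega), if_neg (by omega)]

end Column

namespace IsAdmissibleColumn

variable {r i M F : ℕ} {k : ℕ → ℕ}

lemma of_le_add_one (hir : i ≤ r) (hF : r < F) (h1 : i ≤ k 1)
    (hstep : ∀ s, 1 ≤ s → s + 1 ≤ M → k s ≤ k (s + 1)) (hle : ∀ s ∈ Set.Icc 1 M, k s ≤ F) :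
    IsAdmissibleColumn r i M F k := by
  have hmono : MonotoneOn k (Set.Icc 1 M) :=
    monotoneOn_of_le_add_one Set.ordConnected_Icc fun s _ hs hs' => hstep s hs.1 hs'.2
  exact ⟨hir, hF, hmono, fun s hs => h1.trans (hmono ⟨le_rfl, hs.1.trans hs.2⟩ hs hs.1), hle⟩

lemma stayTime_strictMonoOn (hk : IsAdmissibleColumn r i M F k) :
    StrictMonoOn (stayTime r i k) (Set.Icc 1 M) := by
  intro s hs t ht hst
  have := hk.monotoneOn hs ht hst.le
  have := hk.le_apply s hs
  have := hk.index_le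
  have := hs.1
  unfold stayTime
  split_ifs <;> omega

lemma apply_le_iff (hk : IsAdmissibleColumn r i M F k) {s : ℕ} (hs : s ∈ Set.Icc 1 M) :
    k s ≤ r ↔ s ≤ unbarredCount r M k :=
  le_card_filter_Icc_iff (fun _ _ hx hxy hy h =>
    (hk.monotoneOn ⟨hx, hxy.trans hy⟩ ⟨hx.trans hxy, hy⟩ hxy).trans h) hs

lemma stayTime_lt_iff (hk : IsAdmissibleColumn r i M F k) {s t : ℕ} (hs : s ∈ Set.Icc 1 M) :
    stayTime r i k s < t ↔ s ≤ stayCount r i M k t :=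
  le_card_filter_Icc_iff (fun _ _ hx hxy hy h =>
    (hk.stayTime_strictMonoOn.monotoneOn ⟨hx, hxy.trans hy⟩ ⟨hx.trans hxy, hy⟩ hxy).trans_lt h) hs

lemma stayCount_le_self (hk : IsAdmissibleColumn r i M F k) (t : ℕ) :
    stayCount r i M k t ≤ t := by
  by_contra! h
  have hs : stayCount r i M k t ∈ Set.Icc 1 M := ⟨by omega, stayCount_le t⟩
  have hlt := (hk.stayTime_lt_iff hs).2 le_rfl
  have := hk.le_apply _ hs
  have := hk.index_le
  unfold stayTime at hlt
  split_ifs at hlt <;> omega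

lemma stayCount_stayTime (hk : IsAdmissibleColumn r i M F k) {s : ℕ} (hs : s ∈ Set.Icc 1 M) :
    stayCount r i M k (stayTime r i k s) = s - 1 := by
  obtain ⟨hs1, hsM⟩ := hs
  apply le_antisymm
  · by_contra! h
    exact lt_irrefl _ ((hk.stayTime_lt_iff ⟨hs1, hsM⟩).2 (by omega))
  · rcases Nat.lt_or_ge s 2 with h | h
    · omega
    · exact (hk.stayTime_lt_iff ⟨by omega, by omega⟩).1
        (hk.stayTime_strictMonoOn ⟨by omega, by omega⟩ ⟨hs1, hsM⟩ (by omega))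

lemma stayCount_stayTime_add_one (hk : IsAdmissibleColumn r i M F k) {s : ℕ}
    (hs : s ∈ Set.Icc 1 M) : stayCount r i M k (stayTime r i k s + 1) = s := by
  apply le_antisymm
  · by_contra! h
    have hs' : s + 1 ∈ Set.Icc 1 M := ⟨by omega, h.trans_le (stayCount_le _)⟩
    have := (hk.stayTime_lt_iff hs').2 h
    have := hk.stayTime_strictMonoOn hs hs' (lt_add_one s)
    omega
  · exact (hk.stayTime_lt_iff hs).1 (lt_add_one _)

lemma stayCount_le_unbarredCount (hk : IsAdmissibleColumn r i M F k) {t : ℕ}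
    (ht : t ≤ r - i + unbarredCount r M k) : stayCount r i M k t ≤ unbarredCount r M k := by
  by_contra! h
  have := hk.index_le
  have hs : unbarredCount r M k + 1 ∈ Set.Icc 1 M := ⟨by omega, h.trans_le (stayCount_le t)⟩
  have hks : r < k (unbarredCount r M k + 1) := lt_of_not_ge fun h' => by
    have := (hk.apply_le_iff hs).1 h'
    omega
  have := (hk.stayTime_lt_iff hs).2 h
  rw [stayTime_of_lt hks] at this
  omega

lemma le_stayCount_add (hk : IsAdmissibleColumn r i M F k) {t : ℕ}
    (ht : t ≤ r - i + unbarredCount r M k) : t ≤ stayCount r i M k t + (r - i) := by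
  by_contra! h
  have := hk.index_le
  have hu := unbarredCount_le (r := r) (M := M) (k := k)
  have hs : t + i - r ∈ Set.Icc 1 M := ⟨by omega, by omega⟩
  have hks : k (t + i - r) ≤ r := (hk.apply_le_iff hs).2 (by omega)
  have := (hk.stayTime_lt_iff (t := t) hs).1 (by rw [stayTime_of_le hks]; omega)
  omega

lemma columnPath_unbarredCount (hk : IsAdmissibleColumn r i M F k) :
    columnPath r i M F k (r - i + unbarredCount r M k) = r := by
  have := hk.stayCount_le_unbarredCount le_rfl
  have := hk.le_stayCount_add le_rfl
  have := hk.index_le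
  rw [columnPath_of_le le_rfl]
  omega

lemma columnPath_le_iff (hk : IsAdmissibleColumn r i M F k) {t : ℕ} :
    columnPath r i M F k t ≤ r ↔ t ≤ r - i + unbarredCount r M k := by
  have := hk.index_le
  constructor
  · intro h
    by_contra! ht
    rcases le_or_gt t (r - i + M) with ht' | ht'
    · rw [columnPath_of_lt_of_le ht ht'] at h
      have := (hk.apply_le_iff ⟨by omega, by omega⟩).1 h
      omega
    · rw [columnPath_of_lt ht'] at h
      exact hk.lt_final.not_ge h
  · intro ht
    have := hk.le_stayCount_add ht
    rw [columnPath_of_le ht]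
    omega

lemma le_columnPath (hk : IsAdmissibleColumn r i M F k) (t : ℕ) : i ≤ columnPath r i M F k t := by
  have := hk.index_le
  rcases le_or_gt t (r - i + unbarredCount r M k) with ht | ht
  · have := hk.stayCount_le_self t
    rw [columnPath_of_le ht]
    omega
  rcases le_or_gt t (r - i + M) with ht' | ht'
  · rw [columnPath_of_lt_of_le ht ht']
    exact hk.le_apply _ ⟨by omega, by omega⟩
  · rw [columnPath_of_lt ht']
    exact hk.index_le.trans hk.lt_final.le

lemma columnPath_le (hk : IsAdmissibleColumn r i M F k) (t : ℕ) : columnPath r i M F k t ≤ F := by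
  have := hk.index_le
  rcases le_or_gt t (r - i + unbarredCount r M k) with ht | ht
  · exact (hk.columnPath_le_iff.2 ht).trans hk.lt_final.le
  rcases le_or_gt t (r - i + M) with ht' | ht'
  · rw [columnPath_of_lt_of_le ht ht']
    exact hk.apply_le _ ⟨by omega, by omega⟩
  · rw [columnPath_of_lt ht']

lemma lt_of_columnPath_lt (hk : IsAdmissibleColumn r i M F k) {t : ℕ}
    (h : columnPath r i M F k t < r) : t < r - i + unbarredCount r M k := by
  rcases (hk.columnPath_le_iff.1 h.le).lt_or_eq with ht | rfl
  · exact ht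
  · exact absurd hk.columnPath_unbarredCount h.ne

lemma columnPath_zero (hk : IsAdmissibleColumn r i M F k) : columnPath r i M F k 0 = i := by
  have := hk.stayCount_le_self 0
  rw [columnPath_of_le (Nat.zero_le _)]
  omega

lemma columnPath_add_one_of_lt (hk : IsAdmissibleColumn r i M F k) {t : ℕ}
    (ht : t < r - i + unbarredCount r M k) :
    columnPath r i M F k (t + 1) = columnPath r i M F k t ∨
      columnPath r i M F k (t + 1) = columnPath r i M F k t + 1 := by
  have := hk.stayCount_le_self t
  have := stayCount_mono (r := r) (i := i) (M := M) (k := k) (Nat.le_add_right t 1)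
  have hsucc : stayCount r i M k (t + 1) ≤ stayCount r i M k t + 1 := by
    by_contra! h
    set n := stayCount r i M k (t + 1)
    have hnM : n ≤ M := stayCount_le _
    have hn : n ∈ Set.Icc 1 M := ⟨by omega, hnM⟩
    have hn' : n - 1 ∈ Set.Icc 1 M := ⟨by omega, by omega⟩
    have := (hk.stayTime_lt_iff hn).2 le_rfl
    have := hk.stayTime_strictMonoOn hn' hn (by omega)
    have := (hk.stayTime_lt_iff (t := t) hn').1 (by omega)
    omega
  rw [columnPath_of_le ht.le, columnPath_of_le (show t + 1 ≤ _ from ht)]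
  omega

lemma columnPath_le_add_one_of_le (hk : IsAdmissibleColumn r i M F k) {t : ℕ}
    (ht : r - i + unbarredCount r M k ≤ t) :
    columnPath r i M F k t ≤ columnPath r i M F k (t + 1) := by
  have := hk.index_le
  rcases ht.eq_or_lt with rfl | ht
  · rw [hk.columnPath_unbarredCount]
    exact le_of_not_ge (mt hk.columnPath_le_iff.1 (by omega))
  rcases le_or_gt (t + 1) (r - i + M) with ht' | ht'
  · rw [columnPath_of_lt_of_le ht (by omega), columnPath_of_lt_of_le (by omega) ht']
    exact hk.monotoneOn ⟨by omega, by omega⟩ ⟨by omega, by omega⟩ (by omega)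
  · rw [columnPath_of_lt ht']
    exact hk.columnPath_le t

lemma columnPath_mono (hk : IsAdmissibleColumn r i M F k) : Monotone (columnPath r i M F k) := by
  refine monotone_nat_of_le_succ fun t => ?_
  rcases lt_or_ge t (r - i + unbarredCount r M k) with ht | ht
  · rcases hk.columnPath_add_one_of_lt ht with h | h <;> omega
  · exact hk.columnPath_le_add_one_of_le ht

lemma columnPath_add (hk : IsAdmissibleColumn r i M F k) {b : ℕ} (hb : k M ≤ b + i)
    (hbr : b + i ≤ r) : columnPath r i M F k (M + b) = b + i := by
  have hkM : ∀ s ∈ Set.Icc 1 M, k s ≤ b + i := fun s hs =>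
    (hk.monotoneOn hs ⟨hs.1.trans hs.2, le_rfl⟩ hs.2).trans hb
  have hu := unbarredCount_eq fun s hs => (hkM s hs).trans hbr
  have hc : stayCount r i M k (M + b) = M := by
    refine le_antisymm (stayCount_le _) ?_
    rcases Nat.eq_zero_or_pos M with hM | hM
    · omega
    have hs : M ∈ Set.Icc 1 M := ⟨hM, le_rfl⟩
    refine (hk.stayTime_lt_iff hs).1 ?_
    rw [stayTime_of_le ((hkM M hs).trans hbr)]
    omega
  rw [columnPath_of_le (by omega), hc]
  omega

lemma columnPath_stayTime (hk : IsAdmissibleColumn r i M F k) {s : ℕ} (hs : s ∈ Set.Icc 1 M) :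
    columnPath r i M F k (stayTime r i k s) = k s := by
  have := hk.le_apply s hs
  have := hk.index_le
  obtain ⟨hs1, hsM⟩ := hs
  rcases le_or_gt (k s) r with hks | hks
  · have := (hk.apply_le_iff ⟨hs1, hsM⟩).1 hks
    rw [columnPath_of_le (by rw [stayTime_of_le hks]; omega), hk.stayCount_stayTime ⟨hs1, hsM⟩,
      stayTime_of_le hks]
    omega
  · have : unbarredCount r M k < s := lt_of_not_ge fun h =>
      hks.not_ge ((hk.apply_le_iff ⟨hs1, hsM⟩).2 h)
    rw [stayTime_of_lt hks, columnPath_of_lt_of_le (by omega) (by omega)]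
    congr 1
    omega

lemma columnPath_stayTime_add_one (hk : IsAdmissibleColumn r i M F k) {s : ℕ}
    (hs : s ∈ Set.Icc 1 M) (hks : k s ≤ r) :
    columnPath r i M F k (stayTime r i k s + 1) = k s := by
  have := (hk.apply_le_iff hs).1 hks
  have := hk.le_apply s hs
  have := hs.1
  rw [columnPath_of_le (by rw [stayTime_of_le hks]; omega), hk.stayCount_stayTime_add_one hs,
    stayTime_of_le hks]
  omega

lemma exists_stayTime_eq_of_lt (hk : IsAdmissibleColumn r i M F k) {t : ℕ}
    (ht : t < r - i + unbarredCount r M k)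
    (h : columnPath r i M F k (t + 1) = columnPath r i M F k t) :
    ∃ s ∈ Set.Icc 1 M, stayTime r i k s = t := by
  rw [columnPath_of_le (show t + 1 ≤ _ from ht), columnPath_of_le ht.le] at h
  have := hk.stayCount_le_self t
  have := hk.stayCount_le_self (t + 1)
  have hc : stayCount r i M k (t + 1) = stayCount r i M k t + 1 := by omega
  have hs : stayCount r i M k t + 1 ∈ Set.Icc 1 M := ⟨by omega, hc ▸ stayCount_le _⟩
  have := (hk.stayTime_lt_iff hs).2 hc.ge
  have := mt (hk.stayTime_lt_iff (t := t) hs).1 (by omega)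
  exact ⟨_, hs, by omega⟩

lemma exists_stayTime_eq_of_lt_of_le (hk : IsAdmissibleColumn r i M F k) {t : ℕ}
    (ht : r - i + unbarredCount r M k < t) (ht' : t ≤ r - i + M) :
    ∃ s ∈ Set.Icc 1 M, stayTime r i k s = t := by
  have := hk.index_le
  have hs : t + i - r ∈ Set.Icc 1 M := ⟨by omega, by omega⟩
  have hks : r < k (t + i - r) := lt_of_not_ge fun h => by
    have := (hk.apply_le_iff hs).1 h
    omega
  exact ⟨_, hs, by rw [stayTime_of_lt hks]; omega⟩

section Adjacent

variable {k' : ℕ → ℕ}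

lemma stayTime_le_stayTime (hk : IsAdmissibleColumn r i M F k)
    (hrow : ∀ s ∈ Set.Icc 1 M, k s ≤ k' s ∧ (k s = k' s → k s = r + 1)) {s : ℕ}
    (hs : s ∈ Set.Icc 1 M) (hks : k s ≤ r) : stayTime r i k s ≤ stayTime r (i + 1) k' s := by
  have := hk.le_apply s hs
  have := hs.1
  obtain ⟨hle, heq⟩ := hrow s hs
  rw [stayTime_of_le hks]
  rcases le_or_gt (k' s) r with hks' | hks'
  · have : k s ≠ k' s := fun h => by have := heq h; omega
    rw [stayTime_of_le hks']
    omega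
  · rw [stayTime_of_lt hks']
    omega

lemma stayCount_le_stayCount (hk : IsAdmissibleColumn r i M F k)
    (hrow : ∀ s ∈ Set.Icc 1 M, k s ≤ k' s ∧ (k s = k' s → k s = r + 1)) {t : ℕ}
    (ht : t ≤ r - i + unbarredCount r M k) :
    stayCount r (i + 1) M k' t ≤ stayCount r i M k t :=
  card_le_card fun s hs => by
    simp only [mem_filter, mem_Icc] at hs ⊢
    obtain ⟨hs, hlt⟩ := hs
    refine ⟨hs, ?_⟩
    by_cases hks : k s ≤ r
    · exact (hk.stayTime_le_stayTime hrow hs hks).trans_lt hlt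
    · have := hk.index_le
      have : unbarredCount r M k < s := lt_of_not_ge fun h => hks ((hk.apply_le_iff hs).2 h)
      rw [stayTime_of_lt ((not_le.1 hks).trans_le (hrow s hs).1)] at hlt
      omega

lemma columnPath_lt_columnPath (hk : IsAdmissibleColumn r i M F k)
    (hk' : IsAdmissibleColumn r (i + 1) M (F + 1) k')
    (hrow : ∀ s ∈ Set.Icc 1 M, k s ≤ k' s ∧ (k s = k' s → k s = r + 1))
    (hdiag : ∀ s, 1 ≤ s → s + 1 ≤ M → k s < k' (s + 1)) (t : ℕ) :
    columnPath r i M F k t < columnPath r (i + 1) M (F + 1) k' t := by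
  have := unbarredCount_le_of_le (r := r) fun s hs => (hrow s hs).1
  have := hk'.index_le
  rcases le_or_gt t (r - (i + 1) + unbarredCount r M k') with ht | ht
  · have := hk.stayCount_le_stayCount hrow (t := t) (by omega)
    have := hk.stayCount_le_self t
    have := hk'.stayCount_le_self t
    rw [columnPath_of_le ht, columnPath_of_le (by omega)]
    omega
  rcases le_or_gt t (r - i + unbarredCount r M k) with ht' | ht'
  · exact (hk.columnPath_le_iff.2 ht').trans_lt (not_le.1 (mt hk'.columnPath_le_iff.1 (by omega)))
  rcases lt_or_ge t (r - i + M) with hE | hE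
  · rw [columnPath_of_lt_of_le ht' hE.le, columnPath_of_lt_of_le ht (by omega),
      show t + (i + 1) - r = t + i - r + 1 by omega]
    exact hdiag _ (by omega) (by omega)
  · rw [columnPath_of_lt (show r - (i + 1) + M < t by omega)]
    exact Nat.lt_succ_of_le (hk.columnPath_le t)

lemma columnPath_add_one_le_columnPath (hk : IsAdmissibleColumn r i M F k)
    (hk' : IsAdmissibleColumn r (i + 1) M (F + 1) k')
    (hrow : ∀ s ∈ Set.Icc 1 M, k s ≤ k' s ∧ (k s = k' s → k s = r + 1)) {t : ℕ}
    (ht : r + 1 ≤ columnPath r i M F k (t + 1)) :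
    columnPath r i M F k (t + 1) ≤ columnPath r (i + 1) M (F + 1) k' t ∧
      (columnPath r i M F k (t + 1) = columnPath r (i + 1) M (F + 1) k' t →
        columnPath r i M F k (t + 1) = r + 1) := by
  have := unbarredCount_le_of_le (r := r) fun s hs => (hrow s hs).1
  have := hk'.index_le
  have hT : r - i + unbarredCount r M k < t + 1 :=
    not_le.1 fun h => by have := hk.columnPath_le_iff.2 h; omega
  rcases le_or_gt (t + 1) (r - i + M) with hE | hE
  · rw [columnPath_of_lt_of_le hT hE, columnPath_of_lt_of_le (by omega) (by omega),
      show t + (i + 1) - r = t + 1 + i - r by omega]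
    exact hrow _ ⟨by omega, by omega⟩
  · rw [columnPath_of_lt hE, columnPath_of_lt (show r - (i + 1) + M < t by omega)]
    omega

end Adjacent

end IsAdmissibleColumn

structure IsAdmissibleFamily (r m m' d : ℕ) (K : ℕ → ℕ → ℕ) : Prop where
  column : ∀ i, 1 ≤ i → i ≤ d → IsAdmissibleColumn r i (m - m') (2 * r + 1 - d + i) (K · i)
  row : ∀ s i, 1 ≤ s → s ≤ m - m' → 1 ≤ i → i < d →
    K s i ≤ K s (i + 1) ∧ (K s i = K s (i + 1) → K s i = r + 1)
  diag : ∀ s i, 1 ≤ s → s + 1 ≤ m - m' → 1 ≤ i → i < d → K s i < K (s + 1) (i + 1)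
  last_le : ∀ i, 1 ≤ i → i + m' ≤ r → K (m - m') i ≤ m' + i

namespace IsAdmissibleFamily

variable {r m m' d : ℕ} {K : ℕ → ℕ → ℕ}

def realizingPath (hK : IsAdmissibleFamily r m m' d K) (hm'm : m' ≤ m) : PathB r m m' d where
  a t i := columnPath r i (m - m') (2 * r + 1 - d + i) (K · i) t
  mem t _ i h1 h2 :=
    ⟨h1.trans ((hK.column i h1 h2).le_columnPath t),
      ((hK.column i h1 h2).columnPath_le t).trans (by have := (hK.column i h1 h2).index_le; omega)⟩
  strictRow t _ i h1 h2 :=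
    (hK.column i h1 h2.le).columnPath_lt_columnPath (hK.column (i + 1) (by omega) h2)
      (fun s hs => hK.row s i hs.1 hs.2 h1 h2) (fun s hs hs' => hK.diag s i hs hs' h1 h2) t
  stepLow t _ i h1 h2 h := by
    have hk := hK.column i h1 h2
    exact hk.columnPath_add_one_of_lt (hk.lt_of_columnPath_lt (by have := hk.le_columnPath t; omega))
  stepHigh t _ i h1 h2 _ :=
    ⟨(hK.column i h1 h2).columnPath_mono (Nat.le_add_right t 1),
      ((hK.column i h1 h2).columnPath_le _).trans (by have := (hK.column i h1 h2).index_le; omega)⟩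
  init i h1 h2 := (hK.column i h1 h2).columnPath_zero
  final i h1 h2 := by
    have hk := hK.column i h1 h2
    split_ifs with hc
    · simpa [Nat.sub_add_cancel hm'm] using hk.columnPath_add (hK.last_le i h1 (by omega)) hc
    · exact columnPath_of_lt (by have := hk.index_le; omega)
  barredCond t _ i h1 h2 h :=
    (hK.column i h1 h2.le).columnPath_add_one_le_columnPath (hK.column (i + 1) (by omega) h2)
      (fun s hs => hK.row s i hs.1 hs.2 h1 h2) h

lemma realizingPath_a (hK : IsAdmissibleFamily r m m' d K) (hm'm : m' ≤ m) (t i : ℕ) :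
    (hK.realizingPath hm'm).a t i = columnPath r i (m - m') (2 * r + 1 - d + i) (K · i) t := rfl

lemma stayTime_mem_S (hK : IsAdmissibleFamily r m m' d K) (hm'm : m' ≤ m) {i s : ℕ}
    (h1 : 1 ≤ i) (h2 : i ≤ d) (hs : s ∈ Set.Icc 1 (m - m')) :
    stayTime r i (K · i) s ∈ S r m m' d (hK.realizingPath hm'm) i := by
  have hk := hK.column i h1 h2
  have := hk.le_apply s hs
  have := hk.index_le
  have hval := hk.columnPath_stayTime hs
  unfold S
  split_ifs with hc
  · have hks : K s i ≤ m' + i :=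
      (hk.monotoneOn hs ⟨hs.1.trans hs.2, le_rfl⟩ hs.2).trans (hK.last_le i h1 hc)
    have := hs.1
    have := hs.2
    refine ⟨by rw [stayTime_of_le (by omega)]; omega, ?_⟩
    simp only [realizingPath_a, hval, hk.columnPath_stayTime_add_one hs (by omega)]
  · refine ⟨by have := hs.2; unfold stayTime; split_ifs <;> omega, ?_⟩
    simp only [realizingPath_a, hval]
    rcases le_or_gt (K s i) r with hks | hks
    · exact Or.inl ⟨hks, (hk.columnPath_stayTime_add_one hs hks).symm⟩
    · exact Or.inr hks

lemma exists_stayTime_eq_of_mem_S (hK : IsAdmissibleFamily r m m' d K) (hm'm : m' ≤ m) {i x : ℕ}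
    (h1 : 1 ≤ i) (h2 : i ≤ d) (hx : x ∈ S r m m' d (hK.realizingPath hm'm) i) :
    ∃ s ∈ Set.Icc 1 (m - m'), stayTime r i (K · i) s = x := by
  have hk := hK.column i h1 h2
  have := hk.index_le
  unfold S at hx
  split_ifs at hx with hc
  · obtain ⟨hxm, hstay⟩ := hx
    have hu := unbarredCount_eq fun s hs => ((hk.monotoneOn hs ⟨hs.1.trans hs.2, le_rfl⟩ hs.2).trans
      (hK.last_le i h1 hc)).trans (show m' + i ≤ r by omega)
    exact hk.exists_stayTime_eq_of_lt (by omega) hstay.symm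
  · obtain ⟨hxE, ⟨hle, hstay⟩ | hlt⟩ := hx
    · have := hk.columnPath_le_iff.1 (hstay ▸ hle)
      exact hk.exists_stayTime_eq_of_lt (by omega) hstay.symm
    · have := mt (hk.columnPath_le_iff (t := x)).2 (by simp only [realizingPath_a] at hlt; omega)
      exact hk.exists_stayTime_eq_of_lt_of_le (by omega) (by omega)

lemma isEnum_stayTime (hK : IsAdmissibleFamily r m m' d K) (hm'm : m' ≤ m) :
    IsEnum r m m' d (hK.realizingPath hm'm) fun s i => stayTime r i (K · i) s := by
  intro i h1 h2
  refine ⟨fun s t hs hst ht => (hK.column i h1 h2).stayTime_strictMonoOn ⟨hs, by omega⟩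
    ⟨by omega, ht⟩ hst, fun s hs hsM => hK.stayTime_mem_S hm'm h1 h2 ⟨hs, hsM⟩, fun x hx => ?_⟩
  obtain ⟨s, ⟨hs, hsM⟩, rfl⟩ := hK.exists_stayTime_eq_of_mem_S hm'm h1 h2 hx
  exact ⟨s, hs, hsM, rfl⟩

end IsAdmissibleFamily

theorem realizability_general (r m m' d : ℕ) (hm'm : m' ≤ m) (hdr : d ≤ r - 1)
    (K : ℕ → ℕ → ℕ)
    -- all values lie in `J`
    (hmem : ∀ s i, 1 ≤ s → s ≤ m - m' → 1 ≤ i → i ≤ d → 1 ≤ K s i ∧ K s i ≤ 2*r+1)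
    -- `K^{(s)}_1 ≤ K^{(s)}_2 ≤ ⋯ ≤ K^{(s)}_d`, with equality only at `0`
    (hrow : ∀ s i, 1 ≤ s → s ≤ m - m' → 1 ≤ i → i < d →
      K s i ≤ K s (i+1) ∧ (K s i = K s (i+1) → K s i = r + 1))
    -- `i ≤ K^{(1)}_i ≤ ⋯ ≤ K^{(m-m')}_i ≤ m'+i` for `1 ≤ i ≤ r-m'`
    (hcol1 : ∀ i, 1 ≤ i → i + m' ≤ r →
      i ≤ K 1 i ∧ (∀ s, 1 ≤ s → s + 1 ≤ m - m' → K s i ≤ K (s+1) i) ∧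
      K (m - m') i ≤ m' + i)
    -- `i ≤ K^{(1)}_i ≤ ⋯ ≤ K^{(m-m')}_i ≤ 1̄` for `r-m'+1 ≤ i ≤ d`
    (hcol2 : ∀ i, r < i + m' → i ≤ d →
      i ≤ K 1 i ∧ (∀ s, 1 ≤ s → s + 1 ≤ m - m' → K s i ≤ K (s+1) i) ∧
      K (m - m') i ≤ 2*r+1)
    -- `K^{(s)}_i < K^{(s+1)}_{i+1}`
    (hdiag : ∀ s i, 1 ≤ s → s + 1 ≤ m - m' → 1 ≤ i → i < d →
      K s i < K (s+1) (i+1)) :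
    ∃ (p : PathB r m m' d) (l : ℕ → ℕ → ℕ),
      IsEnum r m m' d p l ∧
      ∀ s i, 1 ≤ s → s ≤ m - m' → 1 ≤ i → i ≤ d → p.a (l s i) i = K s i := by
  have hcol : ∀ i, 1 ≤ i → i ≤ d →
      i ≤ K 1 i ∧ ∀ s, 1 ≤ s → s + 1 ≤ m - m' → K s i ≤ K (s + 1) i := by
    intro i h1 h2
    rcases le_or_gt (i + m') r with hc | hc
    · exact ⟨(hcol1 i h1 hc).1, (hcol1 i h1 hc).2.1⟩
    · exact ⟨(hcol2 i hc h2).1, (hcol2 i hc h2).2.1⟩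
  have hK : IsAdmissibleFamily r m m' d K :=
    { column := fun i h1 h2 => .of_le_add_one (by omega) (by omega) (hcol i h1 h2).1
        (hcol i h1 h2).2 fun s hs => le_two_mul_add_one_sub_add (x := (K s ·)) (by omega)
          (hmem s d hs.1 hs.2 (by omega) le_rfl).2 (fun j hj1 hj => hrow s j hs.1 hs.2 hj1 hj) h1 h2
      row := hrow
      diag := hdiag
      last_le := fun i h1 hc => (hcol1 i h1 hc).2.2 }
  exact ⟨hK.realizingPath hm'm, _, hK.isEnum_stayTime hm'm,
    fun s i hs hsM h1 h2 => (hK.column i h1 h2).columnPath_stayTime ⟨hs, hsM⟩⟩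

/-- Realizability of admissible families: any family `(K^{(s)}_i)` satisfying the
conditions `(*)` of Theorem 5.6 arises as the family of invariants `k^{(s)}_i` of
some path `p ∈ X_d(m,m')` (case `m' + d > r`). -/
theorem realizability (r m m' d : ℕ) (hr : 2 ≤ r) (hm'1 : 1 ≤ m') (hm'm : m' ≤ m)
    (hmr : m ≤ r) (hd1 : 1 ≤ d) (hdr : d ≤ r - 1) (hcase : r < m' + d)
    (K : ℕ → ℕ → ℕ)
    -- all values lie in `J`
    (hmem : ∀ s i, 1 ≤ s → s ≤ m - m' → 1 ≤ i → i ≤ d → 1 ≤ K s i ∧ K s i ≤ 2*r+1)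
    -- `K^{(s)}_1 ≤ K^{(s)}_2 ≤ ⋯ ≤ K^{(s)}_d`, with equality only at `0`
    (hrow : ∀ s i, 1 ≤ s → s ≤ m - m' → 1 ≤ i → i < d →
      K s i ≤ K s (i+1) ∧ (K s i = K s (i+1) → K s i = r + 1))
    -- `i ≤ K^{(1)}_i ≤ ⋯ ≤ K^{(m-m')}_i ≤ m'+i` for `1 ≤ i ≤ r-m'`
    (hcol1 : ∀ i, 1 ≤ i → i + m' ≤ r →
      i ≤ K 1 i ∧ (∀ s, 1 ≤ s → s + 1 ≤ m - m' → K s i ≤ K (s+1) i) ∧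
      K (m - m') i ≤ m' + i)
    -- `i ≤ K^{(1)}_i ≤ ⋯ ≤ K^{(m-m')}_i ≤ 1̄` for `r-m'+1 ≤ i ≤ d`
    (hcol2 : ∀ i, r < i + m' → i ≤ d →
      i ≤ K 1 i ∧ (∀ s, 1 ≤ s → s + 1 ≤ m - m' → K s i ≤ K (s+1) i) ∧
      K (m - m') i ≤ 2*r+1)
    -- `K^{(s)}_i < K^{(s+1)}_{i+1}`
    (hdiag : ∀ s i, 1 ≤ s → s + 1 ≤ m - m' → 1 ≤ i → i < d →
      K s i < K (s+1) (i+1)) :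
    ∃ (p : PathB r m m' d) (l : ℕ → ℕ → ℕ),
      IsEnum r m m' d p l ∧
      ∀ s i, 1 ≤ s → s ≤ m - m' → 1 ≤ i → i ≤ d → p.a (l s i) i = K s i :=
  realizability_general r m m' d hm'm hdr K hmem hrow hcol1 hcol2 hdiag

end Stmt2
end
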